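/- The set of P-positions of Rational Nim equals {(x + n·(p₁+p₂), y + n·(q₁+q₂)) : (x,y) ∈ T_Q, n ∈ ℕ}. -/

import Mathlib

/-!
The linear forms `c₁ = X q₂ - Y p₂` and `c₂ = Y p₁ - X q₁` are nonnegative exactly on `B_Q`,
and they determine a position, since `D X = p₁ c₁ + p₂ c₂` and `D Y = q₁ c₁ + q₂ c₂`.
The move `(s, 0)` lowers `c₁` by `s D` and fixes `c₂`; the move `(0, t)` lowers `c₂` by `t D`
and fixes `c₁`. So Rational Nim is two-heap Nim with heaps `⌊c₁ / D⌋` and `⌊c₂ / D⌋`, whose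
P-positions are those with equal heaps. `T_Q` is the set of positions where both heaps are empty,
and adding `(p₁ + p₂, q₁ + q₂)` adds one to both heaps.
-/

/-- Membership in the set of allowed positions `B_Q`. -/
def inBQ (p1 q1 p2 q2 : ℕ) (pos : ℕ × ℕ) : Prop :=
  pos.1 * q1 ≤ pos.2 * p1 ∧ pos.2 * p2 ≤ pos.1 * q2

/-- Membership in the set `T_Q` (the inequalities are read in ℤ). -/
def inTQ (p1 q1 p2 q2 : ℕ) (pos : ℕ × ℕ) : Prop :=
  inBQ p1 q1 p2 q2 pos ∧
    (p1 : ℤ) * ((pos.2 : ℤ) - (q2 : ℤ)) < (q1 : ℤ) * ((pos.1 : ℤ) - (p2 : ℤ)) ∧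
    (p2 : ℤ) * ((pos.2 : ℤ) - (q1 : ℤ)) > (q2 : ℤ) * ((pos.1 : ℤ) - (p1 : ℤ))

/-- A legal move of the Q-subtraction game `G_Q(M)`. -/
def QMove (p1 q1 p2 q2 : ℕ) (M : Set (ℕ × ℕ)) (pos pos' : ℕ × ℕ) : Prop :=
  ∃ s t : ℕ, (s, t) ∈ M ∧
    p1 * s + p2 * t ≤ pos.1 ∧ q1 * s + q2 * t ≤ pos.2 ∧
    pos'.1 = pos.1 - (p1 * s + p2 * t) ∧ pos'.2 = pos.2 - (q1 * s + q2 * t) ∧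
    inBQ p1 q1 p2 q2 pos'

/-- `pos` is a P-position of the game with move relation `move`: every legal move
leads to a non-P-position.  (Every legal move of the games considered here strictly
decreases the coordinate sum, which makes the recursion well-founded.) -/
def PPos (move : ℕ × ℕ → ℕ × ℕ → Prop) : ℕ × ℕ → Prop
  | pos => ∀ pos', move pos pos' → pos'.1 + pos'.2 < pos.1 + pos.2 → ¬ PPos move pos'
termination_by pos => pos.1 + pos.2

/-- The move set of Rational Nim. -/
def MRN : Set (ℕ × ℕ) := {m | ∃ t : ℕ, 1 ≤ t ∧ (m = (0, t) ∨ m = (t, 0))}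

theorem PPos_iff_of_sum_lt {move : ℕ × ℕ → ℕ × ℕ → Prop}
    (hdec : ∀ pos pos', move pos pos' → pos'.1 + pos'.2 < pos.1 + pos.2) (pos : ℕ × ℕ) :
    PPos move pos ↔ ∀ pos', move pos pos' → ¬ PPos move pos' := by
  rw [PPos]
  exact forall_congr' fun pos' => ⟨fun h hm => h hm (hdec _ _ hm), fun h hm _ => h hm⟩

theorem PPos_iff_of_independent_of_absorbing {move : ℕ × ℕ → ℕ × ℕ → Prop}
    {B S : ℕ × ℕ → Prop}
    (hdec : ∀ pos pos', move pos pos' → pos'.1 + pos'.2 < pos.1 + pos.2)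
    (hB : ∀ pos pos', B pos → move pos pos' → B pos')
    (hind : ∀ pos pos', move pos pos' → S pos → ¬ S pos')
    (habs : ∀ pos, B pos → ¬ S pos → ∃ pos', move pos pos' ∧ S pos') :
    ∀ pos, B pos → (PPos move pos ↔ S pos) := by
  intro pos
  induction h : pos.1 + pos.2 using Nat.strong_induction_on generalizing pos with
  | _ n ih =>
  intro hpos
  have ih' (pos') (hm : move pos pos') : PPos move pos' ↔ S pos' :=
    ih _ (h ▸ hdec _ _ hm) pos' rfl (hB _ _ hpos hm)
  rw [PPos_iff_of_sum_lt hdec]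
  constructor
  · intro hP
    by_contra hS
    obtain ⟨pos', hm, hS'⟩ := habs pos hpos hS
    exact hP pos' hm ((ih' pos' hm).2 hS')
  · intro hS pos' hm hP'
    exact hind pos pos' hm hS ((ih' pos' hm).1 hP')

namespace RationalNim

def det (p1 q1 p2 q2 : ℕ) : ℤ := p1 * q2 - q1 * p2

def coord1 (p2 q2 : ℕ) (pos : ℕ × ℕ) : ℤ := pos.1 * q2 - pos.2 * p2

def coord2 (p1 q1 : ℕ) (pos : ℕ × ℕ) : ℤ := pos.2 * p1 - pos.1 * q1

def step (p1 q1 p2 q2 s t : ℕ) : ℕ × ℕ := (p1 * s + p2 * t, q1 * s + q2 * t)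

def IsBalanced (p1 q1 p2 q2 : ℕ) (pos : ℕ × ℕ) : Prop :=
  coord1 p2 q2 pos / det p1 q1 p2 q2 = coord2 p1 q1 pos / det p1 q1 p2 q2

variable {p1 q1 p2 q2 : ℕ}

theorem det_pos (hD : q1 * p2 < p1 * q2) : 0 < det p1 q1 p2 q2 := by
  unfold det
  exact sub_pos.2 (by exact_mod_cast hD)

theorem inBQ_iff {pos : ℕ × ℕ} :
    inBQ p1 q1 p2 q2 pos ↔ 0 ≤ coord1 p2 q2 pos ∧ 0 ≤ coord2 p1 q1 pos := by
  simp only [inBQ, coord1, coord2, sub_nonneg]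
  norm_cast
  exact and_comm

theorem inTQ_iff {pos : ℕ × ℕ} :
    inTQ p1 q1 p2 q2 pos ↔ inBQ p1 q1 p2 q2 pos ∧
      coord1 p2 q2 pos < det p1 q1 p2 q2 ∧ coord2 p1 q1 pos < det p1 q1 p2 q2 := by
  unfold inTQ coord1 coord2 det
  constructor <;> rintro ⟨hB, h1, h2⟩ <;> exact ⟨hB, by linarith, by linarith⟩

theorem coord1_add_step (pos : ℕ × ℕ) (s t : ℕ) :
    coord1 p2 q2 (pos + step p1 q1 p2 q2 s t) = coord1 p2 q2 pos + s * det p1 q1 p2 q2 := by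
  simp only [coord1, step, det, Prod.fst_add, Prod.snd_add]
  push_cast
  ring

theorem coord2_add_step (pos : ℕ × ℕ) (s t : ℕ) :
    coord2 p1 q1 (pos + step p1 q1 p2 q2 s t) = coord2 p1 q1 pos + t * det p1 q1 p2 q2 := by
  simp only [coord2, step, det, Prod.fst_add, Prod.snd_add]
  push_cast
  ring

theorem step_self (n : ℕ) : step p1 q1 p2 q2 n n = (n * (p1 + p2), n * (q1 + q2)) := by
  simp only [step]
  ext <;> ring

theorem exists_eq_add_step (hdet : 0 < det p1 q1 p2 q2) {pos : ℕ × ℕ} {s t : ℕ}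
    (hs : s * det p1 q1 p2 q2 ≤ coord1 p2 q2 pos) (ht : t * det p1 q1 p2 q2 ≤ coord2 p1 q1 pos) :
    ∃ pos', pos = pos' + step p1 q1 p2 q2 s t := by
  have h1 : ((p1 * s + p2 * t : ℕ) : ℤ) ≤ pos.1 := by
    push_cast
    unfold coord1 coord2 det at *
    nlinarith [mul_le_mul_of_nonneg_left hs (Int.natCast_nonneg p1),
      mul_le_mul_of_nonneg_left ht (Int.natCast_nonneg p2)]
  have h2 : ((q1 * s + q2 * t : ℕ) : ℤ) ≤ pos.2 := by
    push_cast
    unfold coord1 coord2 det at *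
    nlinarith [mul_le_mul_of_nonneg_left hs (Int.natCast_nonneg q1),
      mul_le_mul_of_nonneg_left ht (Int.natCast_nonneg q2)]
  norm_cast at h1 h2
  exact ⟨(pos.1 - (p1 * s + p2 * t), pos.2 - (q1 * s + q2 * t)),
    Prod.ext (by simp only [Prod.fst_add, step]; omega) (by simp only [Prod.snd_add, step]; omega)⟩

theorem qMove_iff {M : Set (ℕ × ℕ)} {pos pos' : ℕ × ℕ} :
    QMove p1 q1 p2 q2 M pos pos' ↔
      inBQ p1 q1 p2 q2 pos' ∧ ∃ s t, (s, t) ∈ M ∧ pos = pos' + step p1 q1 p2 q2 s t := by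
  constructor
  · rintro ⟨s, t, hM, h1, h2, e1, e2, hB⟩
    exact ⟨hB, s, t, hM,
      Prod.ext (by simp only [Prod.fst_add, step]; omega) (by simp only [Prod.snd_add, step]; omega)⟩
  · rintro ⟨hB, s, t, hM, rfl⟩
    exact ⟨s, t, hM, by simp [step], by simp [step], by simp [step], by simp [step], hB⟩

theorem mem_MRN {s t : ℕ} : (s, t) ∈ MRN ↔ (s = 0 ∧ 0 < t) ∨ (0 < s ∧ t = 0) := by
  simp only [MRN, Set.mem_ofPred_eq, Prod.mk.injEq]
  constructor
  · rintro ⟨u, hu, ⟨rfl, rfl⟩ | ⟨rfl, rfl⟩⟩ <;> omega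
  · rintro (⟨rfl, ht⟩ | ⟨hs, rfl⟩)
    exacts [⟨t, ht, Or.inl ⟨rfl, rfl⟩⟩, ⟨s, hs, Or.inr ⟨rfl, rfl⟩⟩]

theorem sum_lt_of_qMove (hp1 : 0 < p1) (hq2 : 0 < q2) {pos pos' : ℕ × ℕ}
    (h : QMove p1 q1 p2 q2 MRN pos pos') : pos'.1 + pos'.2 < pos.1 + pos.2 := by
  obtain ⟨-, s, t, hst, rfl⟩ := qMove_iff.1 h
  simp only [Prod.fst_add, Prod.snd_add, step]
  rcases mem_MRN.1 hst with ⟨rfl, ht⟩ | ⟨hs, rfl⟩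
  · nlinarith
  · nlinarith

theorem not_isBalanced_of_qMove (hdet : 0 < det p1 q1 p2 q2) {pos pos' : ℕ × ℕ}
    (h : QMove p1 q1 p2 q2 MRN pos pos') (hbal : IsBalanced p1 q1 p2 q2 pos) :
    ¬ IsBalanced p1 q1 p2 q2 pos' := by
  obtain ⟨-, s, t, hst, rfl⟩ := qMove_iff.1 h
  unfold IsBalanced at *
  rw [coord1_add_step, coord2_add_step, Int.add_mul_ediv_right _ _ hdet.ne',
    Int.add_mul_ediv_right _ _ hdet.ne'] at hbal
  intro hbal'
  have : s = t := by omega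
  rw [mem_MRN] at hst
  omega

theorem exists_qMove_of_le (hdet : 0 < det p1 q1 p2 q2) {M : Set (ℕ × ℕ)} {pos : ℕ × ℕ}
    {s t : ℕ} (hM : (s, t) ∈ M)
    (hs : s * det p1 q1 p2 q2 ≤ coord1 p2 q2 pos) (ht : t * det p1 q1 p2 q2 ≤ coord2 p1 q1 pos) :
    ∃ pos', QMove p1 q1 p2 q2 M pos pos' ∧
      coord1 p2 q2 pos' / det p1 q1 p2 q2 = coord1 p2 q2 pos / det p1 q1 p2 q2 - s ∧
      coord2 p1 q1 pos' / det p1 q1 p2 q2 = coord2 p1 q1 pos / det p1 q1 p2 q2 - t := by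
  obtain ⟨pos', rfl⟩ := exists_eq_add_step hdet hs ht
  rw [coord1_add_step] at hs ⊢
  rw [coord2_add_step] at ht ⊢
  refine ⟨pos', qMove_iff.2 ⟨inBQ_iff.2 ⟨by linarith, by linarith⟩, s, t, hM, rfl⟩, ?_, ?_⟩
  · rw [Int.add_mul_ediv_right _ _ hdet.ne']
    ring
  · rw [Int.add_mul_ediv_right _ _ hdet.ne']
    ring

theorem exists_qMove_isBalanced (hdet : 0 < det p1 q1 p2 q2) {pos : ℕ × ℕ}
    (hB : inBQ p1 q1 p2 q2 pos) (hbal : ¬ IsBalanced p1 q1 p2 q2 pos) :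
    ∃ pos', QMove p1 q1 p2 q2 MRN pos pos' ∧ IsBalanced p1 q1 p2 q2 pos' := by
  obtain ⟨h1, h2⟩ := inBQ_iff.1 hB
  have ha := Int.ediv_nonneg h1 hdet.le
  have hb := Int.ediv_nonneg h2 hdet.le
  have ha' := Int.ediv_mul_le (coord1 p2 q2 pos) hdet.ne'
  have hb' := Int.ediv_mul_le (coord2 p1 q1 pos) hdet.ne'
  set a := coord1 p2 q2 pos / det p1 q1 p2 q2
  set b := coord2 p1 q1 pos / det p1 q1 p2 q2
  rcases lt_or_gt_of_ne hbal with hlt | hlt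
  · obtain ⟨pos', hm, e1, e2⟩ := exists_qMove_of_le hdet (s := 0) (t := (b - a).toNat)
      (mem_MRN.2 (.inl ⟨rfl, by omega⟩)) (by simpa using h1)
      (by rw [Int.toNat_of_nonneg (by omega)]; nlinarith)
    refine ⟨pos', hm, ?_⟩
    rw [IsBalanced, e1, e2, Int.toNat_of_nonneg (by omega)]
    ring
  · obtain ⟨pos', hm, e1, e2⟩ := exists_qMove_of_le hdet (s := (a - b).toNat) (t := 0)
      (mem_MRN.2 (.inr ⟨by omega, rfl⟩))
      (by rw [Int.toNat_of_nonneg (by omega)]; nlinarith) (by simpa using h2)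
    refine ⟨pos', hm, ?_⟩
    rw [IsBalanced, e1, e2, Int.toNat_of_nonneg (by omega)]
    ring

theorem inBQ_and_isBalanced_iff (hdet : 0 < det p1 q1 p2 q2) {pos : ℕ × ℕ} :
    inBQ p1 q1 p2 q2 pos ∧ IsBalanced p1 q1 p2 q2 pos ↔
      ∃ x y n : ℕ, inTQ p1 q1 p2 q2 (x, y) ∧ pos = (x + n * (p1 + p2), y + n * (q1 + q2)) := by
  have hshift (x y n : ℕ) : ((x + n * (p1 + p2), y + n * (q1 + q2)) : ℕ × ℕ) =
      (x, y) + step p1 q1 p2 q2 n n := by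
    rw [step_self, Prod.mk_add_mk]
  simp_rw [hshift]
  constructor
  · rintro ⟨hB, hbal⟩
    obtain ⟨h1, h2⟩ := inBQ_iff.1 hB
    obtain ⟨n, hn⟩ : ∃ n : ℕ, (n : ℤ) = coord1 p2 q2 pos / det p1 q1 p2 q2 :=
      ⟨_, Int.toNat_of_nonneg (Int.ediv_nonneg h1 hdet.le)⟩
    have hn' : (n : ℤ) = coord2 p1 q1 pos / det p1 q1 p2 q2 := hn.trans hbal
    have l1 := Int.ediv_mul_le (coord1 p2 q2 pos) hdet.ne'
    have l2 := Int.ediv_mul_le (coord2 p1 q1 pos) hdet.ne'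
    have u1 := Int.lt_ediv_add_one_mul_self (coord1 p2 q2 pos) hdet
    have u2 := Int.lt_ediv_add_one_mul_self (coord2 p1 q1 pos) hdet
    rw [← hn] at l1 u1
    rw [← hn'] at l2 u2
    obtain ⟨base, rfl⟩ := exists_eq_add_step hdet l1 l2
    rw [coord1_add_step] at l1 u1
    rw [coord2_add_step] at l2 u2
    refine ⟨base.1, base.2, n, inTQ_iff.2 ⟨inBQ_iff.2 ⟨?_, ?_⟩, ?_, ?_⟩, rfl⟩ <;> linarith
  · rintro ⟨x, y, n, hT, rfl⟩
    obtain ⟨hB, u1, u2⟩ := inTQ_iff.1 hT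
    obtain ⟨l1, l2⟩ := inBQ_iff.1 hB
    refine ⟨inBQ_iff.2 ⟨?_, ?_⟩, ?_⟩
    · rw [coord1_add_step]; positivity
    · rw [coord2_add_step]; positivity
    · rw [IsBalanced, coord1_add_step, coord2_add_step, Int.add_mul_ediv_right _ _ hdet.ne',
        Int.add_mul_ediv_right _ _ hdet.ne', Int.ediv_eq_zero_of_lt l1 u1,
        Int.ediv_eq_zero_of_lt l2 u2]

end RationalNim

open RationalNim in
theorem stmt_10_general (p1 q1 p2 q2 : ℕ)
    (hD : q1 * p2 < p1 * q2) :
    {pos : ℕ × ℕ | inBQ p1 q1 p2 q2 pos ∧ PPos (QMove p1 q1 p2 q2 MRN) pos} =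
      {pos : ℕ × ℕ | ∃ x y n : ℕ, inTQ p1 q1 p2 q2 (x, y) ∧
        pos = (x + n * (p1 + p2), y + n * (q1 + q2))} := by
  have hdet := det_pos hD
  have hp1 : 0 < p1 := Nat.pos_of_ne_zero (by rintro rfl; simp at hD)
  have hq2 : 0 < q2 := Nat.pos_of_ne_zero (by rintro rfl; simp at hD)
  ext pos
  simp only [Set.mem_ofPred_eq, ← inBQ_and_isBalanced_iff hdet]
  refine and_congr_right fun hB => ?_
  exact PPos_iff_of_independent_of_absorbing (B := inBQ p1 q1 p2 q2)
    (S := IsBalanced p1 q1 p2 q2) (fun _ _ => sum_lt_of_qMove hp1 hq2)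
    (fun _ _ _ hm => (qMove_iff.1 hm).1) (fun _ _ => not_isBalanced_of_qMove hdet)
    (fun _ => exists_qMove_isBalanced hdet) pos hB

theorem stmt_10 (p1 q1 p2 q2 : ℕ) (hp1 : 0 < p1) (hq2 : 0 < q2)
    (hD : q1 * p2 < p1 * q2) :
    {pos : ℕ × ℕ | inBQ p1 q1 p2 q2 pos ∧ PPos (QMove p1 q1 p2 q2 MRN) pos} =
      {pos : ℕ × ℕ | ∃ x y n : ℕ, inTQ p1 q1 p2 q2 (x, y) ∧
        pos = (x + n * (p1 + p2), y + n * (q1 + q2))} :=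
  stmt_10_general p1 q1 p2 q2 hD
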